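/- The multiplication tensor of A₃ = ℂ[x,y,z]/(x²,y²,z²) degenerates to the Coppersmith–Winograd tensor T_{CW,6}: acting on the 8-dimensional space by the diagonal matrices with entries t on the basis elements x, y, z, xyz and 1 on 1, xy, xz, yz (appropriately on each of the three tensor factors, with inverse scaling of the corresponding coefficients), and letting t → 0, the multiplication tensor of A₃ converges to T_{CW,6}. In particular T_{CW,6} lies in the closure of the GL₈×GL₈×GL₈-orbit of the multiplication tensor of A₃. -/

import Mathlib

open Filter

/-- Index of the monomial basis x^a y^b z^c (a,b,c ∈ {0,1}) of ℂ[x,y,z]/(x²,y²,z²). -/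
abbrev ι17 := Fin 2 × Fin 2 × Fin 2

/-- The multiplication tensor of A₃ = ℂ[x,y,z]/(x²,y²,z²) in the monomial basis:
the product of two basis monomials is a basis monomial when no exponent overflows,
and 0 otherwise. -/
noncomputable def TA3 (u v w : ι17) : ℂ :=
  if (u.1 : ℕ) + (v.1 : ℕ) = (w.1 : ℕ) ∧ (u.2.1 : ℕ) + (v.2.1 : ℕ) = (w.2.1 : ℕ)
      ∧ (u.2.2 : ℕ) + (v.2.2 : ℕ) = (w.2.2 : ℕ) then 1 else 0

/-- Parity of the degree of a basis monomial: 1 on x, y, z, xyz and 0 on 1, xy, xz, yz. -/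
def deg17 (u : ι17) : ℕ := ((u.1 : ℕ) + (u.2.1 : ℕ) + (u.2.2 : ℕ)) % 2

/-- The Coppersmith–Winograd tensor T_{CW,6} on the same 8-dimensional space (in the
form where the six degree-one basis vectors multiply in complementary pairs into the
socle element xyz; cf. the matrix representation in the paper). -/
noncomputable def TCW6 (u v w : ι17) : ℂ :=
  if u = ((0, 0, 0) : ι17) then (if v = w then 1 else 0)
  else if v = ((0, 0, 0) : ι17) then (if u = w then 1 else 0)
  else if (u.1 : ℕ) + (v.1 : ℕ) = 1 ∧ (u.2.1 : ℕ) + (v.2.1 : ℕ) = 1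
      ∧ (u.2.2 : ℕ) + (v.2.2 : ℕ) = 1 ∧ w = ((1, 1, 1) : ι17) then 1 else 0

/-!
Grade the monomial basis by the parity `ε` of the degree and scale by `t ^ ε` (inversely on the
output factor). The coefficient of `TA3` at `(u, v, uv)` is multiplied by `t ^ (ε u + ε v - ε (uv))`,
and this exponent is `0` or `2` because `ε` is additive mod 2. It is `0` exactly on the products
with `1` and the complementary products landing in `xyz`, i.e. on the support of `TCW6`. Hence the
scaled tensor is `TCW6 + t ^ 2 * (TA3 - TCW6)`, which tends to `TCW6`, and a diagonal scaling stays
in the orbit of `TA3`.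
-/

section TensorOrbit

variable {R ι : Type*} [CommRing R] [Fintype ι] [DecidableEq ι]

def tensorOrbit (T : ι → ι → ι → R) : Set (ι × ι × ι → R) :=
  {S | ∃ g₁ g₂ g₃ : Matrix ι ι R, IsUnit g₁.det ∧ IsUnit g₂.det ∧ IsUnit g₃.det ∧
    S = fun p => ∑ u, ∑ v, ∑ w, g₁ p.1 u * g₂ p.2.1 v * g₃ p.2.2 w * T u v w}

theorem diagonal_scaling_mem_tensorOrbit (T : ι → ι → ι → R) {a b c : ι → R}
    (ha : ∀ i, IsUnit (a i)) (hb : ∀ i, IsUnit (b i)) (hc : ∀ i, IsUnit (c i)) :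
    (fun p : ι × ι × ι => a p.1 * b p.2.1 * c p.2.2 * T p.1 p.2.1 p.2.2) ∈ tensorOrbit T := by
  have isUnit_det {d : ι → R} (hd : ∀ i, IsUnit (d i)) : IsUnit (Matrix.diagonal d).det :=
    (Matrix.isUnit_iff_isUnit_det _).1 (Matrix.isUnit_diagonal.2 (Pi.isUnit_iff.2 hd))
  refine ⟨Matrix.diagonal a, Matrix.diagonal b, Matrix.diagonal c,
    isUnit_det ha, isUnit_det hb, isUnit_det hc, ?_⟩
  ext p
  simp only [Matrix.diagonal_apply, ite_mul, zero_mul, mul_ite, mul_zero, Finset.sum_ite_eq,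
    Finset.mem_univ, if_true]

end TensorOrbit

def IsA3Product (u v w : ι17) : Prop :=
  (u.1 : ℕ) + (v.1 : ℕ) = (w.1 : ℕ) ∧ (u.2.1 : ℕ) + (v.2.1 : ℕ) = (w.2.1 : ℕ)
    ∧ (u.2.2 : ℕ) + (v.2.2 : ℕ) = (w.2.2 : ℕ)

def IsCW6Product (u v w : ι17) : Prop :=
  (u = (0, 0, 0) ∧ v = w) ∨ (u ≠ (0, 0, 0) ∧ v = (0, 0, 0) ∧ u = w) ∨
    (u ≠ (0, 0, 0) ∧ v ≠ (0, 0, 0) ∧ (u.1 : ℕ) + (v.1 : ℕ) = 1 ∧ (u.2.1 : ℕ) + (v.2.1 : ℕ) = 1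
      ∧ (u.2.2 : ℕ) + (v.2.2 : ℕ) = 1 ∧ w = (1, 1, 1))

instance (u v w : ι17) : Decidable (IsA3Product u v w) := by
  unfold IsA3Product; infer_instance

instance (u v w : ι17) : Decidable (IsCW6Product u v w) := by
  unfold IsCW6Product; infer_instance

theorem TA3_eq_ite (u v w : ι17) : TA3 u v w = if IsA3Product u v w then 1 else 0 := rfl

theorem TCW6_eq_ite (u v w : ι17) : TCW6 u v w = if IsCW6Product u v w then 1 else 0 := by
  unfold TCW6 IsCW6Product
  split_ifs <;> grind

theorem isA3Product_of_isCW6Product : ∀ u v w : ι17, IsCW6Product u v w → IsA3Product u v w := by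
  decide

theorem deg17_add_deg17_of_isA3Product : ∀ u v w : ι17, IsA3Product u v w →
    deg17 u + deg17 v = deg17 w + if IsCW6Product u v w then 0 else 2 := by
  decide

theorem scaled_TA3_eq {t : ℂ} (ht : t ≠ 0) (u v w : ι17) :
    t ^ (deg17 u + deg17 v) * (t ^ deg17 w)⁻¹ * TA3 u v w
      = TCW6 u v w + t ^ 2 * (TA3 u v w - TCW6 u v w) := by
  rw [TA3_eq_ite, TCW6_eq_ite]
  by_cases hA : IsA3Product u v w
  · rw [deg17_add_deg17_of_isA3Product u v w hA]
    split_ifs <;> field_simp <;> ring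
  · simp [hA, mt (isA3Product_of_isCW6Product u v w) hA]

theorem tendsto_scaled_TA3 :
    Tendsto
      (fun t : ℂ => fun p : ι17 × ι17 × ι17 =>
        t ^ (deg17 p.1 + deg17 p.2.1) * (t ^ deg17 p.2.2)⁻¹ * TA3 p.1 p.2.1 p.2.2)
      (nhdsWithin 0 {0}ᶜ)
      (nhds (fun p : ι17 × ι17 × ι17 => TCW6 p.1 p.2.1 p.2.2)) := by
  set T : ι17 × ι17 × ι17 → ℂ := fun p => TCW6 p.1 p.2.1 p.2.2
  set S : ι17 × ι17 × ι17 → ℂ := fun p => TA3 p.1 p.2.1 p.2.2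
  have hcont : Continuous fun t : ℂ => fun p => T p + t ^ 2 * (S p - T p) := by fun_prop
  have hlim : Tendsto (fun t : ℂ => fun p => T p + t ^ 2 * (S p - T p)) (nhdsWithin 0 {0}ᶜ)
      (nhds T) := by
    simpa using (hcont.tendsto 0).mono_left nhdsWithin_le_nhds
  refine hlim.congr' ?_
  filter_upwards [self_mem_nhdsWithin] with t ht
  exact funext fun p => (scaled_TA3_eq ht p.1 p.2.1 p.2.2).symm

/-- Scaling the basis vectors x, y, z, xyz by t (and inversely on the third factor)
and letting t → 0, the multiplication tensor of A₃ converges to T_{CW,6}; in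
particular T_{CW,6} lies in the closure of the GL₈×GL₈×GL₈-orbit of the
multiplication tensor of A₃. -/
theorem stmt17 :
    Tendsto
      (fun t : ℂ => fun p : ι17 × ι17 × ι17 =>
        t ^ (deg17 p.1 + deg17 p.2.1) * (t ^ deg17 p.2.2)⁻¹ * TA3 p.1 p.2.1 p.2.2)
      (nhdsWithin 0 {0}ᶜ)
      (nhds (fun p : ι17 × ι17 × ι17 => TCW6 p.1 p.2.1 p.2.2)) ∧
    (fun p : ι17 × ι17 × ι17 => TCW6 p.1 p.2.1 p.2.2) ∈
      closure {S : ι17 × ι17 × ι17 → ℂ |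
        ∃ g₁ g₂ g₃ : Matrix ι17 ι17 ℂ,
          IsUnit g₁.det ∧ IsUnit g₂.det ∧ IsUnit g₃.det ∧
          S = fun p => ∑ u : ι17, ∑ v : ι17, ∑ w : ι17,
            g₁ p.1 u * g₂ p.2.1 v * g₃ p.2.2 w * TA3 u v w} := by
  have hlim := tendsto_scaled_TA3
  refine ⟨hlim, mem_closure_of_tendsto hlim ?_⟩
  filter_upwards [self_mem_nhdsWithin] with t ht
  have hunit (u : ι17) : IsUnit (t ^ deg17 u) := (pow_ne_zero _ ht).isUnit
  have hmem := diagonal_scaling_mem_tensorOrbit TA3 hunit hunit fun u => (hunit u).inv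
  simp only [← pow_add] at hmem
  exact hmem
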